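/- Fix an integer m ≥ 3 and let U ⊆ ℂ² be a connected open neighborhood of 0. Define the multiplication of holomorphic vector fields X = (X₁, X₂), Y = (Y₁, Y₂) : U → ℂ² pointwise at (t₁,t₂) by X ∘ Y = (X₁Y₁ + t₂^{m−2}·X₂Y₂, X₁Y₂ + X₂Y₁). Then a holomorphic map E : U → ℂ² satisfies the Euler field equation [E, X∘Y] − [E, X]∘Y − X∘[E, Y] = X∘Y for all holomorphic vector fields X, Y : U → ℂ² if and only if there exists c₁ ∈ ℂ such that E(t₁, t₂) = (t₁ + c₁, (2/m)·t₂) for all (t₁,t₂) ∈ U. -/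

import Mathlib

noncomputable section

/-- The Lie bracket `[X, Y](p) = (DY)(p)(X(p)) − (DX)(p)(Y(p))` of (holomorphic) vector
fields on (an open subset of) `ℂ²`. -/
def lieBracket (X Y : (Fin 2 → ℂ) → (Fin 2 → ℂ)) : (Fin 2 → ℂ) → (Fin 2 → ℂ) :=
  fun p => fderiv ℂ Y p (X p) - fderiv ℂ X p (Y p)

/-- The multiplication of the F-manifold `I₂(m)`:
`X ∘ Y = (X₁Y₁ + t₂^{m−2}·X₂Y₂, X₁Y₂ + X₂Y₁)` at the point `(t₁, t₂)`. -/
def mulI2 (m : ℕ) (X Y : (Fin 2 → ℂ) → (Fin 2 → ℂ)) : (Fin 2 → ℂ) → (Fin 2 → ℂ) :=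
  fun p => ![X p 0 * Y p 0 + p 1 ^ (m - 2) * (X p 1 * Y p 1),
             X p 0 * Y p 1 + X p 1 * Y p 0]

lemma hasFDerivAt_vec2 {f g : (Fin 2 → ℂ) → ℂ} {Lf Lg : (Fin 2 → ℂ) →L[ℂ] ℂ} {p : Fin 2 → ℂ}
    (hf : HasFDerivAt f Lf p) (hg : HasFDerivAt g Lg p) :
    HasFDerivAt (fun q => ![f q, g q]) (ContinuousLinearMap.pi ![Lf, Lg]) p := by
  apply hasFDerivAt_pi''
  intro i
  fin_cases i <;> simp [ContinuousLinearMap.proj_pi, hf, hg]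

lemma clm_apply_eq2 (L : (Fin 2 → ℂ) →L[ℂ] (Fin 2 → ℂ)) (v : Fin 2 → ℂ) :
    L v = v 0 • L ![1,0] + v 1 • L ![0,1] := by
  have hv : v = v 0 • ![(1:ℂ),0] + v 1 • ![(0:ℂ),1] := by
    funext i; fin_cases i <;> simp
  rw [show L v = L (v 0 • ![(1:ℂ),0] + v 1 • ![(0:ℂ),1]) by rw [← hv]]
  rw [map_add, map_smul, map_smul]

lemma clm_eq_zero {L : (Fin 2 → ℂ) →L[ℂ] ℂ} (h0 : L ![1,0] = 0) (h1 : L ![0,1] = 0) : L = 0 := by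
  ext v
  have hv : v = v 0 • ![(1:ℂ),0] + v 1 • ![(0:ℂ),1] := by
    funext i; fin_cases i <;> simp
  rw [show L v = L (v 0 • ![(1:ℂ),0] + v 1 • ![(0:ℂ),1]) by rw [← hv]]
  rw [map_add, map_smul, map_smul, h0, h1]; simp

lemma const_of_hasFDerivAt_zero {U : Set (Fin 2 → ℂ)} (hU : IsOpen U)
    (hUc : IsPreconnected U) {f : (Fin 2 → ℂ) → ℂ}
    (hf : ∀ p ∈ U, HasFDerivAt f (0 : (Fin 2 → ℂ) →L[ℂ] ℂ) p)
    {a b : Fin 2 → ℂ} (ha : a ∈ U) (hb : b ∈ U) : f a = f b := by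
  have loc : ∀ x ∈ U, ∀ᶠ y in nhds x, f y = f x := by
    intro x hx
    obtain ⟨ε, hε, hball⟩ := Metric.isOpen_iff.1 hU x hx
    filter_upwards [Metric.ball_mem_nhds x hε] with y hy
    refine (convex_ball x ε).is_const_of_fderivWithin_eq_zero
      (fun z hz => ((hf z (hball hz)).differentiableAt).differentiableWithinAt)
      (fun z hz => ?_) hy (Metric.mem_ball_self hε)
    rw [fderivWithin_of_isOpen Metric.isOpen_ball hz, (hf z (hball hz)).fderiv]
  classical
  set S := {x : Fin 2 → ℂ | x ∈ U ∧ f x = f b} with hS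
  set T := {x : Fin 2 → ℂ | x ∈ U ∧ f x ≠ f b} with hT
  have hSo : IsOpen S := by
    rw [isOpen_iff_mem_nhds]
    rintro x ⟨hxU, hxf⟩
    filter_upwards [loc x hxU, hU.mem_nhds hxU] with y hy hyU
    exact ⟨hyU, hy.trans hxf⟩
  have hTo : IsOpen T := by
    rw [isOpen_iff_mem_nhds]
    rintro x ⟨hxU, hxf⟩
    filter_upwards [loc x hxU, hU.mem_nhds hxU] with y hy hyU
    exact ⟨hyU, hy.symm ▸ hxf⟩
  by_contra hab
  obtain ⟨x, -, ⟨-, hx1⟩, -, hx2⟩ := hUc S T hSo hTo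
    (fun x hx => by by_cases h : f x = f b; exacts [Or.inl ⟨hx, h⟩, Or.inr ⟨hx, h⟩])
    ⟨b, hb, hb, rfl⟩ ⟨a, ha, ha, hab⟩
  exact hx2 hx1

lemma key_identities (m : ℕ) (hm : 3 ≤ m) {U : Set (Fin 2 → ℂ)} (hU : IsOpen U)
    {E : (Fin 2 → ℂ) → (Fin 2 → ℂ)}
    (heq : ∀ X Y : (Fin 2 → ℂ) → (Fin 2 → ℂ),
        DifferentiableOn ℂ X U → DifferentiableOn ℂ Y U →
        ∀ p ∈ U,
          lieBracket E (mulI2 m X Y) p - mulI2 m (lieBracket E X) Y p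
            - mulI2 m X (lieBracket E Y) p = mulI2 m X Y p)
    {p : Fin 2 → ℂ} (hp : p ∈ U) :
    (fderiv ℂ E p ![1,0] 0 = 1 ∧ fderiv ℂ E p ![1,0] 1 = 0) ∧
      (fderiv ℂ E p ![0,1] 0 = 0 ∧
        ((m:ℂ) - 2) * p 1 ^ (m-3) * E p 1 + 2 * p 1 ^ (m-2) * fderiv ℂ E p ![0,1] 1
          = 2 * p 1 ^ (m-2)) := by
  have hm0 : (m:ℂ) ≠ 0 := Nat.cast_ne_zero.2 (by omega)
  have hd1 : DifferentiableOn ℂ (fun _ : Fin 2 → ℂ => ![(1:ℂ),0]) U :=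
    (differentiable_const _).differentiableOn
  have hd2 : DifferentiableOn ℂ (fun _ : Fin 2 → ℂ => ![(0:ℂ),1]) U :=
    (differentiable_const _).differentiableOn
  have hZ11 : mulI2 m (fun _ : Fin 2 → ℂ => ![(1:ℂ),0]) (fun _ => ![(1:ℂ),0])
      = fun _ => ![(1:ℂ),0] := by
    funext q i; fin_cases i <;> simp [mulI2]
  have hZ22 : mulI2 m (fun _ : Fin 2 → ℂ => ![(0:ℂ),1]) (fun _ => ![(0:ℂ),1])
      = fun q => ![q 1 ^ (m-2), (0:ℂ)] := by
    funext q i; fin_cases i <;> simp [mulI2]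
  have h1 := heq _ _ hd1 hd1 p hp
  rw [hZ11] at h1
  simp only [lieBracket, mulI2, fderiv_const_apply (E := Fin 2 → ℂ)] at h1
  have h10 := congrFun h1 0
  have h11 := congrFun h1 1
  simp [Matrix.vecHead, Matrix.vecTail] at h10 h11
  have ha0 : fderiv ℂ E p ![1,0] 0 = 1 := by linear_combination h10
  have ha1 : fderiv ℂ E p ![1,0] 1 = 0 := by linear_combination h11
  have hgp : HasFDerivAt (fun q : Fin 2 → ℂ => q 1 ^ (m-2))
      ((((m-2 : ℕ):ℂ) * p 1 ^ (m-2-1)) • (ContinuousLinearMap.proj 1 : (Fin 2 → ℂ) →L[ℂ] ℂ)) p :=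
    (hasDerivAt_pow (m-2) (p 1)).comp_hasFDerivAt p
      (ContinuousLinearMap.proj (R := ℂ) (φ := fun _ : Fin 2 => ℂ) 1).hasFDerivAt
  have hZd : HasFDerivAt (fun q : Fin 2 → ℂ => ![q 1 ^ (m-2), (0:ℂ)])
      (ContinuousLinearMap.pi ![(((m-2 : ℕ):ℂ) * p 1 ^ (m-2-1)) • (ContinuousLinearMap.proj 1 : (Fin 2 → ℂ) →L[ℂ] ℂ), 0]) p :=
    hasFDerivAt_vec2 hgp (hasFDerivAt_const 0 p)
  have h2 := heq _ _ hd2 hd2 p hp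
  rw [hZ22] at h2
  have hAg : fderiv ℂ E p ![p 1 ^ (m-2), (0:ℂ)] = p 1 ^ (m-2) • fderiv ℂ E p ![1,0] := by
    rw [clm_apply_eq2]; simp
  simp only [lieBracket, mulI2, fderiv_const_apply (E := Fin 2 → ℂ)] at h2
  rw [hZd.fderiv] at h2
  rw [hAg] at h2
  have h20 := congrFun h2 0
  have h21 := congrFun h2 1
  simp [Matrix.vecHead, Matrix.vecTail, ha0, ha1] at h20 h21
  refine ⟨⟨ha0, ha1⟩, h21, ?_⟩
  have hml : m - 2 - 1 = m - 3 := by omega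
  have hm2 : m - 2 = (m - 3) + 1 := by omega
  have hcast : ((m - 2 : ℕ) : ℂ) = (m : ℂ) - 2 := by
    push_cast [Nat.cast_sub (by omega : 2 ≤ m)]; ring
  rw [hml, hcast, hm2, pow_succ] at h20
  rw [hm2, pow_succ]
  linear_combination h20

lemma backward (m : ℕ) (hm : 3 ≤ m) {U : Set (Fin 2 → ℂ)} (hU : IsOpen U)
    {E : (Fin 2 → ℂ) → (Fin 2 → ℂ)} (c₁ : ℂ)
    (hEeq : ∀ p ∈ U, E p = ![p 0 + c₁, (2 / (m:ℂ)) * p 1])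
    {X Y : (Fin 2 → ℂ) → (Fin 2 → ℂ)} (hX : DifferentiableOn ℂ X U) (hY : DifferentiableOn ℂ Y U)
    {p : Fin 2 → ℂ} (hp : p ∈ U) :
    lieBracket E (mulI2 m X Y) p - mulI2 m (lieBracket E X) Y p
      - mulI2 m X (lieBracket E Y) p = mulI2 m X Y p := by
  have hm0 : (m:ℂ) ≠ 0 := Nat.cast_ne_zero.2 (by omega)
  have hXp : DifferentiableAt ℂ X p := (hX p hp).differentiableAt (hU.mem_nhds hp)
  have hYp : DifferentiableAt ℂ Y p := (hY p hp).differentiableAt (hU.mem_nhds hp)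
  set A : (Fin 2 → ℂ) →L[ℂ] ℂ := ContinuousLinearMap.proj 0 with hA
  set B : (Fin 2 → ℂ) →L[ℂ] ℂ := (2/(m:ℂ)) • ContinuousLinearMap.proj 1 with hB
  have hEref : HasFDerivAt (fun q : Fin 2 → ℂ => ![q 0 + c₁, (2/(m:ℂ)) * q 1])
      (ContinuousLinearMap.pi ![A, B]) p := by
    refine hasFDerivAt_vec2 ?_ ?_
    · exact (ContinuousLinearMap.proj 0 : (Fin 2 → ℂ) →L[ℂ] ℂ).hasFDerivAt.add_const c₁
    · exact (ContinuousLinearMap.proj 1 : (Fin 2 → ℂ) →L[ℂ] ℂ).hasFDerivAt.const_mul _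
  have hEp : HasFDerivAt E (ContinuousLinearMap.pi ![A, B]) p := by
    refine hEref.congr_of_eventuallyEq ?_
    filter_upwards [hU.mem_nhds hp] with q hq
    exact hEeq q hq
  have hx0 : HasFDerivAt (fun q => X q 0) ((ContinuousLinearMap.proj 0).comp (fderiv ℂ X p)) p :=
    (ContinuousLinearMap.proj (R := ℂ) (φ := fun _ : Fin 2 => ℂ) 0).hasFDerivAt.comp p hXp.hasFDerivAt
  have hx1 : HasFDerivAt (fun q => X q 1) ((ContinuousLinearMap.proj 1).comp (fderiv ℂ X p)) p :=
    (ContinuousLinearMap.proj (R := ℂ) (φ := fun _ : Fin 2 => ℂ) 1).hasFDerivAt.comp p hXp.hasFDerivAt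
  have hy0 : HasFDerivAt (fun q => Y q 0) ((ContinuousLinearMap.proj 0).comp (fderiv ℂ Y p)) p :=
    (ContinuousLinearMap.proj (R := ℂ) (φ := fun _ : Fin 2 => ℂ) 0).hasFDerivAt.comp p hYp.hasFDerivAt
  have hy1 : HasFDerivAt (fun q => Y q 1) ((ContinuousLinearMap.proj 1).comp (fderiv ℂ Y p)) p :=
    (ContinuousLinearMap.proj (R := ℂ) (φ := fun _ : Fin 2 => ℂ) 1).hasFDerivAt.comp p hYp.hasFDerivAt
  have hgp : HasFDerivAt (fun q : Fin 2 → ℂ => q 1 ^ (m-2))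
      ((((m-2 : ℕ):ℂ) * p 1 ^ (m-2-1)) • (ContinuousLinearMap.proj 1 : (Fin 2 → ℂ) →L[ℂ] ℂ)) p := by
    exact (hasDerivAt_pow (m-2) (p 1)).comp_hasFDerivAt p
      (ContinuousLinearMap.proj (R := ℂ) (φ := fun _ : Fin 2 => ℂ) 1).hasFDerivAt
  have hZ : HasFDerivAt (mulI2 m X Y)
      (ContinuousLinearMap.pi ![(fun q => X q 0) p • ((ContinuousLinearMap.proj 0).comp (fderiv ℂ Y p)) + (fun q => Y q 0) p • ((ContinuousLinearMap.proj 0).comp (fderiv ℂ X p)) + ((fun q : Fin 2 → ℂ => q 1 ^ (m-2)) p • ((fun q => X q 1) p • ((ContinuousLinearMap.proj 1).comp (fderiv ℂ Y p)) + (fun q => Y q 1) p • ((ContinuousLinearMap.proj 1).comp (fderiv ℂ X p))) + ((fun q => X q 1) p * (fun q => Y q 1) p) • ((((m-2 : ℕ):ℂ) * p 1 ^ (m-2-1)) • (ContinuousLinearMap.proj 1 : (Fin 2 → ℂ) →L[ℂ] ℂ))),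
        (fun q => X q 0) p • ((ContinuousLinearMap.proj 1).comp (fderiv ℂ Y p)) + (fun q => Y q 1) p • ((ContinuousLinearMap.proj 0).comp (fderiv ℂ X p)) + ((fun q => X q 1) p • ((ContinuousLinearMap.proj 0).comp (fderiv ℂ Y p)) + (fun q => Y q 0) p • ((ContinuousLinearMap.proj 1).comp (fderiv ℂ X p)))]) p := by
    exact hasFDerivAt_vec2 ((hx0.mul hy0).add (hgp.mul (hx1.mul hy1))) ((hx0.mul hy1).add (hx1.mul hy0))
  have hfZ := hZ.fderiv
  have hfE := hEp.fderiv
  have hml : m - 2 - 1 = m - 3 := by omega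
  have hm2 : m - 2 = (m - 3) + 1 := by omega
  have hcast : ((m - 2 : ℕ) : ℂ) = (m : ℂ) - 2 := by
    push_cast [Nat.cast_sub (by omega : 2 ≤ m)]; ring
  have hcast3 : ((m - 3 : ℕ) : ℂ) = (m : ℂ) - 3 := by
    push_cast [Nat.cast_sub (by omega : 3 ≤ m)]; ring
  funext i
  simp only [Pi.sub_apply]
  simp only [lieBracket, mulI2, Pi.sub_apply, hfZ, hfE]
  rw [hEeq p hp]
  fin_cases i <;>
    simp [ContinuousLinearMap.pi_apply, ContinuousLinearMap.add_apply,
      ContinuousLinearMap.coe_smul', Pi.smul_apply, ContinuousLinearMap.comp_apply,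
      ContinuousLinearMap.proj_apply, ContinuousLinearMap.smul_apply, smul_eq_mul,
      hml, hm2, pow_succ, hcast, hcast3, hA, hB] <;>
    field_simp <;> ring

/-- **Theorem 2.8(b), equation (2.5), of David–Hertling.** On the F-manifold `I₂(m)`
(`m ≥ 3`), a holomorphic vector field `E` satisfies the Euler field equation
`Lie_E(∘) = ∘`, i.e. `[E, X∘Y] − [E,X]∘Y − X∘[E,Y] = X∘Y` for all holomorphic vector
fields `X, Y`, if and only if `E = (t₁ + c₁)∂₁ + (2/m)t₂∂₂` for some `c₁ ∈ ℂ`. -/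
theorem euler_fields_on_I2 (m : ℕ) (hm : 3 ≤ m)
    (U : Set (Fin 2 → ℂ)) (hU : IsOpen U) (hUc : IsConnected U) (hU0 : (0 : Fin 2 → ℂ) ∈ U)
    (E : (Fin 2 → ℂ) → (Fin 2 → ℂ)) (hE : DifferentiableOn ℂ E U) :
    (∀ X Y : (Fin 2 → ℂ) → (Fin 2 → ℂ),
        DifferentiableOn ℂ X U → DifferentiableOn ℂ Y U →
        ∀ p ∈ U,
          lieBracket E (mulI2 m X Y) p - mulI2 m (lieBracket E X) Y p
            - mulI2 m X (lieBracket E Y) p = mulI2 m X Y p) ↔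
      ∃ c₁ : ℂ, ∀ p ∈ U, E p = ![p 0 + c₁, (2 / (m : ℂ)) * p 1] := by
  constructor
  · intro heq
    have hm0 : (m:ℂ) ≠ 0 := Nat.cast_ne_zero.2 (by omega)
    have key := fun p hp => key_identities m hm hU heq (p := p) hp
    have hEd : ∀ p ∈ U, HasFDerivAt E (fderiv ℂ E p) p := fun p hp =>
      ((hE p hp).differentiableAt (hU.mem_nhds hp)).hasFDerivAt
    -- first component: E q 0 - q 0 is constant
    have hw : ∀ p ∈ U, HasFDerivAt (fun q : Fin 2 → ℂ => E q 0 - q 0)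
        (0 : (Fin 2 → ℂ) →L[ℂ] ℂ) p := by
      intro p hp
      have h := ((ContinuousLinearMap.proj (R := ℂ) (φ := fun _ : Fin 2 => ℂ) 0).hasFDerivAt.comp
          p (hEd p hp)).sub
        (ContinuousLinearMap.proj (R := ℂ) (φ := fun _ : Fin 2 => ℂ) 0).hasFDerivAt
      have hL : (ContinuousLinearMap.proj 0).comp (fderiv ℂ E p)
          - (ContinuousLinearMap.proj (R := ℂ) (φ := fun _ : Fin 2 => ℂ) 0) = 0 := by
        refine clm_eq_zero ?_ ?_ <;>
          simp [(key p hp).1.1, (key p hp).2.1]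
      rwa [hL] at h
    -- second component: u := m * E q 1 - 2 * q 1
    have hu : ∀ p ∈ U, HasFDerivAt (fun q : Fin 2 → ℂ => (m:ℂ) * E q 1 - 2 * q 1)
        ((m:ℂ) • ((ContinuousLinearMap.proj 1).comp (fderiv ℂ E p))
          - (2:ℂ) • (ContinuousLinearMap.proj 1 : (Fin 2 → ℂ) →L[ℂ] ℂ)) p := by
      intro p hp
      exact (((ContinuousLinearMap.proj (R := ℂ) (φ := fun _ : Fin 2 => ℂ) 1).hasFDerivAt.comp
          p (hEd p hp)).const_mul _).sub
        ((ContinuousLinearMap.proj (R := ℂ) (φ := fun _ : Fin 2 => ℂ) 1).hasFDerivAt.const_mul _)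
    have hv : ∀ p ∈ U, HasFDerivAt (fun q : Fin 2 → ℂ =>
        ((m:ℂ) * E q 1 - 2 * q 1) * ((m:ℂ) * E q 1 - 2 * q 1) * q 1 ^ (m-2))
        (0 : (Fin 2 → ℂ) →L[ℂ] ℂ) p := by
      intro p hp
      have hgp : HasFDerivAt (fun q : Fin 2 → ℂ => q 1 ^ (m-2))
          ((((m-2 : ℕ):ℂ) * p 1 ^ (m-2-1)) • (ContinuousLinearMap.proj 1 : (Fin 2 → ℂ) →L[ℂ] ℂ)) p :=
        (hasDerivAt_pow (m-2) (p 1)).comp_hasFDerivAt p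
          (ContinuousLinearMap.proj (R := ℂ) (φ := fun _ : Fin 2 => ℂ) 1).hasFDerivAt
      have h := ((hu p hp).mul (hu p hp)).mul hgp
      have hml : m - 2 - 1 = m - 3 := by omega
      have hm2 : m - 2 = (m - 3) + 1 := by omega
      have hcast : ((m - 2 : ℕ) : ℂ) = (m : ℂ) - 2 := by
        push_cast [Nat.cast_sub (by omega : 2 ≤ m)]; ring
      have hODE := (key p hp).2.2
      rw [hm2, pow_succ] at hODE
      have hL : (((m:ℂ) * E p 1 - 2 * p 1) * ((m:ℂ) * E p 1 - 2 * p 1))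
            • ((((m-2 : ℕ):ℂ) * p 1 ^ (m-2-1)) • (ContinuousLinearMap.proj 1 : (Fin 2 → ℂ) →L[ℂ] ℂ))
          + p 1 ^ (m-2)
            • (((m:ℂ) * E p 1 - 2 * p 1)
                • ((m:ℂ) • ((ContinuousLinearMap.proj 1).comp (fderiv ℂ E p))
                  - (2:ℂ) • (ContinuousLinearMap.proj 1 : (Fin 2 → ℂ) →L[ℂ] ℂ))
              + ((m:ℂ) * E p 1 - 2 * p 1)
                • ((m:ℂ) • ((ContinuousLinearMap.proj 1).comp (fderiv ℂ E p))
                  - (2:ℂ) • (ContinuousLinearMap.proj 1 : (Fin 2 → ℂ) →L[ℂ] ℂ))) = 0 := by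
        refine clm_eq_zero ?_ ?_
        · simp [(key p hp).1.2]
        · simp only [ContinuousLinearMap.add_apply, ContinuousLinearMap.smul_apply,
            ContinuousLinearMap.sub_apply, ContinuousLinearMap.comp_apply,
            ContinuousLinearMap.proj_apply, ContinuousLinearMap.zero_apply, smul_eq_mul,
            Matrix.cons_val_one, Matrix.head_cons, Matrix.cons_val_zero]
          rw [hml, hcast, hm2, pow_succ]
          linear_combination ((m:ℂ) * ((m:ℂ) * E p 1 - 2 * p 1)) * hODE
      exact hL ▸ h
    -- conclusions from constancy
    have hUpc : IsPreconnected U := hUc.isPreconnected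
    refine ⟨E 0 0, fun p hp => ?_⟩
    have hwc : E p 0 - p 0 = E 0 0 - (0 : Fin 2 → ℂ) 0 :=
      const_of_hasFDerivAt_zero hU hUpc hw hp hU0
    have hvc : ∀ q ∈ U, ((m:ℂ) * E q 1 - 2 * q 1) * ((m:ℂ) * E q 1 - 2 * q 1) * q 1 ^ (m-2) = 0 := by
      intro q hq
      have := const_of_hasFDerivAt_zero hU hUpc hv hq hU0
      simpa [zero_pow (show m - 2 ≠ 0 by omega)] using this
    -- u vanishes where q 1 ≠ 0
    have hune : ∀ q ∈ U, q 1 ≠ 0 → (m:ℂ) * E q 1 - 2 * q 1 = 0 := by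
      intro q hq hq1
      have h := hvc q hq
      have := mul_eq_zero.1 h
      rcases this with h' | h'
      · rcases mul_eq_zero.1 h' with h'' | h'' <;> exact h''
      · exact absurd h' (pow_ne_zero _ hq1)
    -- u vanishes everywhere by continuity
    have hu0 : ∀ q ∈ U, (m:ℂ) * E q 1 - 2 * q 1 = 0 := by
      intro q hq
      by_cases hq1 : q 1 ≠ 0
      · exact hune q hq hq1
      push_neg at hq1
      set u : (Fin 2 → ℂ) → ℂ := fun r => (m:ℂ) * E r 1 - 2 * r 1 with hudef
      have hucont : ContinuousWithinAt u U q := by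
        have h1 : ContinuousWithinAt (fun r : Fin 2 → ℂ => E r 1) U q :=
          ((continuous_apply 1).comp_continuousOn hE.continuousOn) q hq
        exact (h1.const_smul (m:ℂ)).sub ((continuous_const.mul (continuous_apply 1)).continuousWithinAt)
      set φ : ℂ → (Fin 2 → ℂ) := fun z => q + z • ![0,1] with hφdef
      have hφc : Continuous φ := continuous_const.add (continuous_id.smul continuous_const)
      have hφ0 : φ 0 = q := by
        funext i; fin_cases i <;> simp [hφdef, Matrix.vecHead, Matrix.vecTail]
      have hφ1 : ∀ z, φ z 1 = z := by
        intro z; simp [hφdef, hq1, Matrix.vecHead, Matrix.vecTail]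
      have hφt : Filter.Tendsto φ (nhds 0) (nhds q) := by
        have := hφc.tendsto 0
        rwa [hφ0] at this
      have htd : Filter.Tendsto φ (nhdsWithin 0 {(0:ℂ)}ᶜ) (nhdsWithin q U) := by
        rw [tendsto_nhdsWithin_iff]
        refine ⟨hφt.mono_left nhdsWithin_le_nhds, ?_⟩
        exact (hφt.eventually (hU.mem_nhds hq)).filter_mono nhdsWithin_le_nhds
      have hlim : Filter.Tendsto (u ∘ φ) (nhdsWithin 0 {(0:ℂ)}ᶜ) (nhds (u q)) :=
        hucont.tendsto.comp htd
      have hzero : (u ∘ φ) =ᶠ[nhdsWithin 0 {(0:ℂ)}ᶜ] fun _ => 0 := by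
        have hmem : ∀ᶠ z in nhdsWithin (0:ℂ) {(0:ℂ)}ᶜ, φ z ∈ U :=
          (hφt.eventually (hU.mem_nhds hq)).filter_mono nhdsWithin_le_nhds
        filter_upwards [hmem, self_mem_nhdsWithin] with z hz hz0
        exact hune (φ z) hz (by rw [hφ1]; exact hz0)
      have : u q = 0 :=
        tendsto_nhds_unique (hlim.congr' hzero) tendsto_const_nhds
      exact this
    funext i
    fin_cases i
    · show E p 0 = ![p 0 + E 0 0, 2 / (m:ℂ) * p 1] 0
      simp only [Matrix.cons_val_zero]
      have h := hwc
      simp only [Pi.zero_apply, sub_zero] at h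
      linear_combination h
    · show E p 1 = ![p 0 + E 0 0, 2 / (m:ℂ) * p 1] 1
      simp only [Matrix.cons_val_one, Matrix.head_cons]
      have h := hu0 p hp
      show E p 1 = 2 / (m:ℂ) * p 1
      field_simp
      linear_combination h
  · rintro ⟨c₁, hEeq⟩ X Y hX hY p hp
    exact backward m hm hU c₁ hEeq hX hY hp

end
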